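/- arXiv:2405.17525 — 2 statements merged into one kernel-verified Lean document; each statement's English description precedes it below -/
import Mathlib

section
/- If the graph G is connected, then the powers of the propagation matrix converge to the projector Q: the sequence t ↦ P^t tends to Q (entrywise) as t → ∞. In particular, P^∞ := lim_{t→∞} P^t exists and its (i,j)-th entry equals √(d_i + 1)·√(d_j + 1)/(2m + n). -/
open Filter Topology

section Aux

/-- Quadratic form identity for symmetric matrices: the weighted sum of
`(y i + ε * y j)^2` over entries. -/
private lemma quad_aux {n : ℕ} (B : Matrix (Fin n) (Fin n) ℝ)
    (hB : ∀ i j, B i j = B j i) (y : Fin n → ℝ) (ε : ℝ) :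
    ∑ i, ∑ j, B i j * (y i + ε * y j) ^ 2
      = (1 + ε ^ 2) * (∑ i, (∑ j, B i j) * y i ^ 2)
        + 2 * ε * ∑ i, ∑ j, B i j * (y i * y j) := by
  have h1 : ∑ i, ∑ j, B i j * y j ^ 2 = ∑ i, (∑ j, B i j) * y i ^ 2 := by
    rw [Finset.sum_comm]
    refine Finset.sum_congr rfl fun j _ => ?_
    rw [Finset.sum_mul]
    exact Finset.sum_congr rfl fun i _ => by rw [hB i j]
  have h2 : ∀ i j : Fin n, B i j * (y i + ε * y j) ^ 2
      = B i j * y i ^ 2 + ε ^ 2 * (B i j * y j ^ 2) + 2 * ε * (B i j * (y i * y j)) := by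
    intro i j; ring
  simp_rw [h2, Finset.sum_add_distrib, ← Finset.mul_sum]
  rw [h1]
  have h3 : ∑ i, ∑ j, B i j * y i ^ 2 = ∑ i, (∑ j, B i j) * y i ^ 2 := by
    refine Finset.sum_congr rfl fun i _ => ?_
    rw [Finset.sum_mul]
  rw [h3]; ring

/-- A function that is constant across edges of a connected graph is constant. -/
private lemma const_of_connected {n : ℕ} {G : SimpleGraph (Fin n)} (hconn : G.Connected)
    {y : Fin n → ℝ} (h : ∀ i j, G.Adj i j → y i = y j) (i j : Fin n) : y i = y j := by
  obtain ⟨w⟩ := hconn.preconnected i j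
  induction w with
  | nil => rfl
  | cons h' p ih => exact (h _ _ h').trans ih

end Aux

/-- Lemma 1: for a connected graph, the powers of the propagation matrix
`P = (I + M)/2` converge entrywise to `Q = (2m+n)⁻¹ v vᵀ`; in particular the limit
`P^∞` exists and its `(i,j)`-th entry is `√(dᵢ+1) √(dⱼ+1) / (2m+n)`. -/
theorem stmt_4 (n : ℕ) (hn : 1 ≤ n) (G : SimpleGraph (Fin n)) [DecidableRel G.Adj]
    (hconn : G.Connected)
    (m : ℕ) (hm : m = G.edgeFinset.card)
    (A : Matrix (Fin n) (Fin n) ℝ) (hA : A = G.adjMatrix ℝ)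
    (d : Fin n → ℝ) (hd : ∀ i, d i = ∑ j, A i j)
    (M : Matrix (Fin n) (Fin n) ℝ)
    (hM : M = Matrix.diagonal (fun i => (Real.sqrt (d i + 1))⁻¹) * (A + 1) *
              Matrix.diagonal (fun i => (Real.sqrt (d i + 1))⁻¹))
    (P : Matrix (Fin n) (Fin n) ℝ) (hP : P = (2 : ℝ)⁻¹ • (1 + M))
    (v : Fin n → ℝ) (hv : ∀ i, v i = Real.sqrt (d i + 1))
    (Q : Matrix (Fin n) (Fin n) ℝ)
    (hQ : Q = ((2 * m + n : ℝ))⁻¹ • Matrix.vecMulVec v v) :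
    (∀ i j, Tendsto (fun t : ℕ => (P ^ t) i j) atTop (𝓝 (Q i j))) ∧
      (∀ i j, Q i j = Real.sqrt (d i + 1) * Real.sqrt (d j + 1) / (2 * m + n)) := by
  -- basic positivity facts
  have hd0 : ∀ i, 0 ≤ d i := by
    intro i
    rw [hd]
    refine Finset.sum_nonneg fun j _ => ?_
    rw [hA, SimpleGraph.adjMatrix_apply]
    split <;> norm_num
  have hd1 : ∀ i, 0 < d i + 1 := fun i => by linarith [hd0 i]
  have hvpos : ∀ i, 0 < v i := fun i => by rw [hv]; exact Real.sqrt_pos.2 (hd1 i)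
  have hv2 : ∀ i, v i ^ 2 = d i + 1 := fun i => by
    rw [hv, Real.sq_sqrt (le_of_lt (hd1 i))]
  -- facts about A + 1
  have hAt_apply : ∀ i j, (A + 1) i j = A i j + if i = j then 1 else 0 := by
    intro i j; simp [Matrix.add_apply, Matrix.one_apply]
  have hAt_symm : ∀ i j, (A + 1) i j = (A + 1) j i := by
    intro i j
    rw [hAt_apply, hAt_apply, hA, SimpleGraph.adjMatrix_apply, SimpleGraph.adjMatrix_apply]
    congr 1
    · exact if_congr (G.adj_comm i j) rfl rfl
    · exact if_congr eq_comm rfl rfl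
  have hAt_nonneg : ∀ i j, 0 ≤ (A + 1) i j := by
    intro i j
    rw [hAt_apply, hA, SimpleGraph.adjMatrix_apply]
    split <;> split <;> norm_num
  have hAt_row : ∀ i, ∑ j, (A + 1) i j = d i + 1 := by
    intro i
    simp_rw [hAt_apply]
    rw [Finset.sum_add_distrib, ← hd i]
    simp
  have hAt_adj : ∀ i j, G.Adj i j → (A + 1) i j = 1 := by
    intro i j hij
    rw [hAt_apply, hA, SimpleGraph.adjMatrix_apply, if_pos hij, if_neg hij.ne]
    norm_num
  -- entrywise formula for M
  have hMapply : ∀ i j, M i j = (v i)⁻¹ * ((A + 1) i j * (v j)⁻¹) := by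
    intro i j
    have hfun : (fun i => (Real.sqrt (d i + 1))⁻¹) = fun i => (v i)⁻¹ :=
      funext fun i => by rw [hv]
    rw [hM, hfun, Matrix.mul_diagonal, Matrix.diagonal_mul]
    ring
  have hMsymm : ∀ i j, M i j = M j i := by
    intro i j; rw [hMapply, hMapply, hAt_symm]; ring
  have hPapply : ∀ i j, P i j = 2⁻¹ * ((if i = j then (1:ℝ) else 0) + M i j) := by
    intro i j; rw [hP]; simp [Matrix.add_apply, Matrix.one_apply]
  have hPsymm : ∀ i j, P i j = P j i := by
    intro i j; rw [hPapply, hPapply, hMsymm]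
    congr 2
    exact if_congr eq_comm rfl rfl
  have hPmv : ∀ (x : Fin n → ℝ) i,
      ∑ j, P i j * x j = 2⁻¹ * (x i + ∑ j, M i j * x j) := by
    intro x i
    calc ∑ j, P i j * x j
        = ∑ j, (2⁻¹ * ((if i = j then (1:ℝ) else 0) * x j) + 2⁻¹ * (M i j * x j)) := by
          refine Finset.sum_congr rfl fun j _ => ?_
          rw [hPapply]; ring
      _ = 2⁻¹ * (x i + ∑ j, M i j * x j) := by
          rw [Finset.sum_add_distrib, ← Finset.mul_sum, ← Finset.mul_sum]
          simp only [ite_mul, one_mul, zero_mul, Finset.sum_ite_eq, Finset.mem_univ, if_true]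
          ring
  -- quadratic form bounds for P
  have hsum_bounds : ∀ x : Fin n → ℝ,
      0 ≤ ∑ i, x i * ∑ j, P i j * x j ∧
        ∑ i, x i * ∑ j, P i j * x j ≤ ∑ i, x i * x i := by
    intro x
    set y : Fin n → ℝ := fun i => (v i)⁻¹ * x i with hy
    have hMq : ∑ i, x i * ∑ j, M i j * x j = ∑ i, ∑ j, (A + 1) i j * (y i * y j) := by
      refine Finset.sum_congr rfl fun i _ => ?_
      rw [Finset.mul_sum]
      refine Finset.sum_congr rfl fun j _ => ?_
      rw [hMapply, hy]
      ring
    have hIq : ∑ i, x i * x i = ∑ i, (∑ j, (A + 1) i j) * y i ^ 2 := by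
      refine Finset.sum_congr rfl fun i _ => ?_
      rw [hAt_row, ← hv2, hy]
      have hvne : v i ≠ 0 := ne_of_gt (hvpos i)
      field_simp
    have hPq : ∑ i, x i * ∑ j, P i j * x j
        = 2⁻¹ * (∑ i, x i * x i + ∑ i, x i * ∑ j, M i j * x j) := by
      calc ∑ i, x i * ∑ j, P i j * x j
          = ∑ i, (2⁻¹ * (x i * x i) + 2⁻¹ * (x i * ∑ j, M i j * x j)) := by
            refine Finset.sum_congr rfl fun i _ => ?_
            rw [hPmv]; ring
        _ = _ := by
            rw [Finset.sum_add_distrib, ← Finset.mul_sum, ← Finset.mul_sum]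
            ring
    have hqplus := quad_aux (A + 1) hAt_symm y 1
    have hqminus := quad_aux (A + 1) hAt_symm y (-1)
    have hnnplus : 0 ≤ ∑ i, ∑ j, (A + 1) i j * (y i + 1 * y j) ^ 2 :=
      Finset.sum_nonneg fun i _ => Finset.sum_nonneg fun j _ =>
        mul_nonneg (hAt_nonneg i j) (sq_nonneg _)
    have hnnminus : 0 ≤ ∑ i, ∑ j, (A + 1) i j * (y i + (-1) * y j) ^ 2 :=
      Finset.sum_nonneg fun i _ => Finset.sum_nonneg fun j _ =>
        mul_nonneg (hAt_nonneg i j) (sq_nonneg _)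
    rw [hqplus] at hnnplus
    rw [hqminus] at hnnminus
    rw [hPq, hMq, hIq]
    norm_num at hnnplus hnnminus ⊢
    constructor <;> nlinarith [hnnplus, hnnminus]
  -- P is hermitian
  have hH : P.IsHermitian := by
    show P.conjTranspose = P
    ext i j
    rw [Matrix.conjTranspose_apply, star_trivial]
    exact hPsymm j i
  -- spectral decomposition
  set lam : Fin n → ℝ := hH.eigenvalues with hlam
  set u : Fin n → Fin n → ℝ := fun k => ⇑(hH.eigenvectorBasis k) with hu
  have hcomp : ∀ i j, ∑ k, u k i * u k j = if i = j then (1:ℝ) else 0 := by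
    intro i j
    have h : (hH.eigenvectorUnitary : Matrix (Fin n) (Fin n) ℝ) *
        star (hH.eigenvectorUnitary : Matrix (Fin n) (Fin n) ℝ) = 1 := hH.eigenvectorUnitary.2.2
    rw [← Matrix.ext_iff] at h
    have h2 := h i j
    rw [Matrix.mul_apply] at h2
    simpa [Matrix.star_apply, Matrix.one_apply, hu] using h2
  have horth : ∀ k l, ∑ i, u k i * u l i = if k = l then (1:ℝ) else 0 := by
    intro k l
    have h : star (hH.eigenvectorUnitary : Matrix (Fin n) (Fin n) ℝ) *
        (hH.eigenvectorUnitary : Matrix (Fin n) (Fin n) ℝ) = 1 := hH.eigenvectorUnitary.2.1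
    rw [← Matrix.ext_iff] at h
    have h2 := h k l
    rw [Matrix.mul_apply] at h2
    simpa [Matrix.star_apply, Matrix.one_apply, hu] using h2
  have heig : ∀ k i, ∑ j, P i j * u k j = lam k * u k i := by
    intro k i
    have h := congrFun (hH.mulVec_eigenvectorBasis k) i
    simpa [Matrix.mulVec, dotProduct, hu] using h
  have hnorm : ∀ k, ∑ i, u k i * u k i = 1 := fun k => by simpa using horth k k
  have hquadlam : ∀ k, ∑ i, u k i * ∑ j, P i j * u k j = lam k := by
    intro k
    simp_rw [heig]
    calc ∑ i, u k i * (lam k * u k i) = lam k * ∑ i, u k i * u k i := by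
          rw [Finset.mul_sum]
          exact Finset.sum_congr rfl fun i _ => by ring
      _ = lam k := by rw [hnorm k, mul_one]
  have hlam0 : ∀ k, 0 ≤ lam k := by
    intro k
    have h := (hsum_bounds (u k)).1
    rwa [hquadlam k] at h
  have hlam1 : ∀ k, lam k ≤ 1 := by
    intro k
    have h := (hsum_bounds (u k)).2
    rwa [hquadlam k, hnorm k] at h
  -- power formula
  have hpow : ∀ t i j, (P ^ t) i j = ∑ k, lam k ^ t * (u k i * u k j) := by
    intro t
    induction t with
    | zero =>
      intro i j
      simp only [pow_zero, Matrix.one_apply, one_mul]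
      exact (hcomp i j).symm
    | succ t ih =>
      intro i j
      rw [pow_succ, Matrix.mul_apply]
      simp_rw [ih]
      calc ∑ l, (∑ k, lam k ^ t * (u k i * u k l)) * P l j
          = ∑ k, ∑ l, lam k ^ t * (u k i * u k l) * P l j := by
            simp_rw [Finset.sum_mul]; exact Finset.sum_comm
        _ = ∑ k, lam k ^ (t + 1) * (u k i * u k j) := by
            refine Finset.sum_congr rfl fun k _ => ?_
            have h1 : ∑ l, lam k ^ t * (u k i * u k l) * P l j
                = lam k ^ t * u k i * ∑ l, P j l * u k l := by
              rw [Finset.mul_sum]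
              refine Finset.sum_congr rfl fun l _ => ?_
              rw [hPsymm l j]; ring
            rw [h1, heig k j]; ring
  -- v is a fixed vector of P
  have hPv : ∀ i, ∑ j, P i j * v j = v i := by
    intro i
    rw [hPmv]
    have hMv : ∑ j, M i j * v j = v i := by
      have he : ∀ j, M i j * v j = (v i)⁻¹ * (A + 1) i j := by
        intro j
        rw [hMapply]
        have hvj : (v j)⁻¹ * v j = 1 := inv_mul_cancel₀ (ne_of_gt (hvpos j))
        calc (v i)⁻¹ * ((A + 1) i j * (v j)⁻¹) * v j
            = (v i)⁻¹ * (A + 1) i j * ((v j)⁻¹ * v j) := by ring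
          _ = (v i)⁻¹ * (A + 1) i j := by rw [hvj, mul_one]
      simp_rw [he]
      rw [← Finset.mul_sum, hAt_row, ← hv2, sq, ← mul_assoc,
        inv_mul_cancel₀ (ne_of_gt (hvpos i)), one_mul]
    rw [hMv]; ring
  have hvv : ∑ i, v i * v i = 2 * m + n := by
    have h1 : ∀ i, v i * v i = d i + 1 := fun i => by rw [← hv2 i]; ring
    simp_rw [h1]
    rw [Finset.sum_add_distrib]
    have h2 : ∑ i, d i = 2 * m := by
      have h3 : ∀ i : Fin n, d i = (G.degree i : ℝ) := by
        intro i
        rw [hd, hA]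
        simpa [Matrix.mulVec, dotProduct] using
          SimpleGraph.adjMatrix_mulVec_const_apply (G := G) (α := ℝ) (a := 1) (v := i)
      simp_rw [h3]
      rw [← Nat.cast_sum, SimpleGraph.sum_degrees_eq_twice_card_edges, hm]
      push_cast; ring
    rw [h2, Finset.sum_const, Finset.card_univ, Fintype.card_fin, nsmul_eq_mul, mul_one]
  have h2mn : (0:ℝ) < 2 * m + n := by
    have h1 : (1:ℝ) ≤ (n:ℝ) := by exact_mod_cast hn
    have hm0 : (0:ℝ) ≤ m := Nat.cast_nonneg m
    linarith
  -- eigenvectors of eigenvalue 1 are multiples of v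
  have hfix : ∀ x : Fin n → ℝ, (∀ i, ∑ j, P i j * x j = x i) → ∃ c : ℝ, ∀ i, x i = c * v i := by
    intro x hx
    set y : Fin n → ℝ := fun i => (v i)⁻¹ * x i with hy
    have hxy : ∀ i, x i = v i * y i := by
      intro i
      rw [hy]
      have hvi : v i ≠ 0 := ne_of_gt (hvpos i)
      field_simp
    have hMx : ∀ i, ∑ j, M i j * x j = x i := by
      intro i
      have h := hx i
      rw [hPmv] at h
      linarith
    have hAy : ∀ i, ∑ j, (A + 1) i j * y j = (d i + 1) * y i := by
      intro i
      have hvne : v i ≠ 0 := ne_of_gt (hvpos i)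
      have h1 : ∑ j, M i j * x j = (v i)⁻¹ * ∑ j, (A + 1) i j * y j := by
        rw [Finset.mul_sum]
        refine Finset.sum_congr rfl fun j _ => ?_
        rw [hMapply, hy]
        ring
      have h2 := hMx i
      rw [h1] at h2
      have h3 : ∑ j, (A + 1) i j * y j = v i * x i := by
        have h4 := congrArg (fun z => v i * z) h2
        simpa [← mul_assoc, mul_inv_cancel₀ hvne] using h4
      rw [h3, hxy i, ← hv2]
      ring
    have hsum0 : ∑ i, ∑ j, (A + 1) i j * (y i + (-1) * y j) ^ 2 = 0 := by
      rw [quad_aux (A + 1) hAt_symm y (-1)]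
      have hS : ∑ i, ∑ j, (A + 1) i j * (y i * y j)
          = ∑ i, (∑ j, (A + 1) i j) * y i ^ 2 := by
        refine Finset.sum_congr rfl fun i _ => ?_
        calc ∑ j, (A + 1) i j * (y i * y j) = y i * ∑ j, (A + 1) i j * y j := by
              rw [Finset.mul_sum]
              exact Finset.sum_congr rfl fun j _ => by ring
          _ = (∑ j, (A + 1) i j) * y i ^ 2 := by rw [hAy i, hAt_row]; ring
      rw [hS]; ring
    have hadj : ∀ i j, G.Adj i j → y i = y j := by
      intro i j hij
      have h1 := (Finset.sum_eq_zero_iff_of_nonneg (fun i' _ =>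
        Finset.sum_nonneg fun j' _ =>
          mul_nonneg (hAt_nonneg i' j') (sq_nonneg _))).1 hsum0 i (Finset.mem_univ i)
      have h2 := (Finset.sum_eq_zero_iff_of_nonneg (fun j' _ =>
        mul_nonneg (hAt_nonneg i j') (sq_nonneg _))).1 h1 j (Finset.mem_univ j)
      rw [hAt_adj i j hij, one_mul] at h2
      have h5 := sq_eq_zero_iff.1 h2
      linarith
    refine ⟨y ⟨0, hn⟩, fun i => ?_⟩
    rw [hxy i, const_of_connected hconn hadj i ⟨0, hn⟩]
    ring
  -- the limit matrix
  set w : Fin n → ℝ := fun k => if lam k = 1 then (1:ℝ) else 0 with hw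
  set Lmat : Fin n → Fin n → ℝ := fun i j => ∑ k, w k * (u k i * u k j) with hLmat
  have hLx : ∀ (x : Fin n → ℝ) i,
      ∑ l, Lmat i l * x l = ∑ k, w k * (∑ l, u k l * x l) * u k i := by
    intro x i
    simp only [hLmat]
    calc ∑ l, (∑ k, w k * (u k i * u k l)) * x l
        = ∑ k, ∑ l, w k * (u k i * u k l) * x l := by
          simp_rw [Finset.sum_mul]; exact Finset.sum_comm
      _ = ∑ k, w k * (∑ l, u k l * x l) * u k i := by
          refine Finset.sum_congr rfl fun k _ => ?_
          have he : ∀ l, w k * (u k i * u k l) * x l = w k * (u k l * x l) * u k i :=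
            fun l => by ring
          simp_rw [he, ← Finset.sum_mul, ← Finset.mul_sum]
  have hPLx : ∀ (x : Fin n → ℝ) i,
      ∑ j, P i j * (∑ l, Lmat j l * x l) = ∑ l, Lmat i l * x l := by
    intro x i
    simp_rw [hLx]
    calc ∑ j, P i j * ∑ k, w k * (∑ l, u k l * x l) * u k j
        = ∑ j, ∑ k, w k * (∑ l, u k l * x l) * (P i j * u k j) := by
          refine Finset.sum_congr rfl fun j _ => ?_
          rw [Finset.mul_sum]
          exact Finset.sum_congr rfl fun k _ => by ring
      _ = ∑ k, ∑ j, w k * (∑ l, u k l * x l) * (P i j * u k j) := Finset.sum_comm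
      _ = ∑ k, w k * (∑ l, u k l * x l) * ∑ j, P i j * u k j := by
          exact Finset.sum_congr rfl fun k _ => (Finset.mul_sum _ _ _).symm
      _ = ∑ k, w k * (∑ l, u k l * x l) * u k i := by
          refine Finset.sum_congr rfl fun k _ => ?_
          rw [heig k i]
          have hwk : w k * lam k = w k := by
            rw [hw]; dsimp only; split
            · rename_i h; rw [h, mul_one]
            · ring
          calc w k * (∑ l, u k l * x l) * (lam k * u k i)
              = w k * lam k * (∑ l, u k l * x l) * u k i := by ring
            _ = w k * (∑ l, u k l * x l) * u k i := by rw [hwk]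
  have hLv : ∀ i, ∑ l, Lmat i l * v l = v i := by
    intro i
    rw [hLx]
    have hc0 : ∀ k, lam k ≠ 1 → ∑ l, u k l * v l = 0 := by
      intro k hk
      have h1 : lam k * ∑ l, u k l * v l = ∑ l, u k l * v l := by
        calc lam k * ∑ l, u k l * v l = ∑ l, lam k * u k l * v l := by
              rw [Finset.mul_sum]
              exact Finset.sum_congr rfl fun l _ => by ring
          _ = ∑ l, (∑ j, P l j * u k j) * v l := by
              refine Finset.sum_congr rfl fun l _ => ?_
              rw [heig k l]
          _ = ∑ j, u k j * ∑ l, P j l * v l := by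
              simp_rw [Finset.sum_mul]
              rw [Finset.sum_comm]
              refine Finset.sum_congr rfl fun j _ => ?_
              rw [Finset.mul_sum]
              refine Finset.sum_congr rfl fun l _ => ?_
              rw [hPsymm l j]; ring
          _ = ∑ l, u k l * v l := by
              refine Finset.sum_congr rfl fun j _ => ?_
              rw [hPv j]
      have h2 : (lam k - 1) * ∑ l, u k l * v l = 0 := by
        rw [sub_mul, one_mul, h1, sub_self]
      rcases mul_eq_zero.1 h2 with h | h
      · exact absurd (by linarith : lam k = 1) hk
      · exact h
    calc ∑ k, w k * (∑ l, u k l * v l) * u k i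
        = ∑ k, (∑ l, u k l * v l) * u k i := by
          refine Finset.sum_congr rfl fun k _ => ?_
          rw [hw]; dsimp only; split
          · rw [one_mul]
          · rename_i h; rw [hc0 k h]; ring
      _ = ∑ l, v l * ∑ k, u k i * u k l := by
          simp_rw [Finset.sum_mul]
          rw [Finset.sum_comm]
          refine Finset.sum_congr rfl fun l _ => ?_
          rw [Finset.mul_sum]
          exact Finset.sum_congr rfl fun k _ => by ring
      _ = v i := by
          simp_rw [hcomp]
          simp
  have hsymL : ∀ i' j', Lmat i' j' = Lmat j' i' := by
    intro i' j'
    simp only [hLmat]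
    exact Finset.sum_congr rfl fun k _ => by ring
  have hLentry : ∀ i j, Lmat i j = v j / (2 * m + n) * v i := by
    intro i j
    set x0 : Fin n → ℝ := fun l => if l = j then (1:ℝ) else 0 with hx0
    have hLij : ∀ i', ∑ l, Lmat i' l * x0 l = Lmat i' j := by
      intro i'
      rw [hx0]
      simp
    obtain ⟨c, hc⟩ := hfix (fun i' => ∑ l, Lmat i' l * x0 l) (fun i' => hPLx x0 i')
    have h1 : ∑ i', v i' * Lmat i' j = v j := by
      calc ∑ i', v i' * Lmat i' j = ∑ i', Lmat j i' * v i' := by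
            refine Finset.sum_congr rfl fun i' _ => ?_
            rw [hsymL i' j]; ring
        _ = v j := hLv j
    have h2 : ∑ i', v i' * Lmat i' j = c * (2 * m + n) := by
      calc ∑ i', v i' * Lmat i' j = ∑ i', v i' * (c * v i') := by
            refine Finset.sum_congr rfl fun i' _ => ?_
            rw [← hLij i', hc i']
        _ = c * ∑ i', v i' * v i' := by
            rw [Finset.mul_sum]
            exact Finset.sum_congr rfl fun i' _ => by ring
        _ = c * (2 * m + n) := by rw [hvv]
    have hcval : c = v j / (2 * m + n) := by
      have h3 : c * (2 * m + n) = v j := h2.symm.trans h1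
      rw [eq_div_iff (ne_of_gt h2mn)]
      linarith
    have h4 := hc i
    rw [hLij i] at h4
    rw [h4, hcval]
  constructor
  · intro i j
    have hTend : Tendsto (fun t : ℕ => ∑ k, lam k ^ t * (u k i * u k j)) atTop
        (𝓝 (Lmat i j)) := by
      simp only [hLmat]
      refine tendsto_finset_sum _ fun k _ => ?_
      by_cases hk : lam k = 1
      · have he : (fun t : ℕ => lam k ^ t * (u k i * u k j)) = fun _ => u k i * u k j :=
          funext fun t => by rw [hk, one_pow, one_mul]
        rw [he, hw]
        have h1 : (if lam k = 1 then (1:ℝ) else 0) * (u k i * u k j) = u k i * u k j := by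
          simp [hk]
        rw [h1]
        exact tendsto_const_nhds
      · have h0 : Tendsto (fun t : ℕ => lam k ^ t) atTop (𝓝 0) :=
          tendsto_pow_atTop_nhds_zero_of_lt_one (hlam0 k) (lt_of_le_of_ne (hlam1 k) hk)
        have h1 := h0.mul_const (u k i * u k j)
        rw [zero_mul] at h1
        simpa [hw, hk] using h1
    have hQL : Q i j = Lmat i j := by
      rw [hLentry i j, hQ]
      simp only [Matrix.smul_apply, Matrix.vecMulVec_apply, smul_eq_mul]
      rw [div_eq_mul_inv]
      ring
    rw [hQL]
    simpa [hpow] using hTend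
  · intro i j
    rw [hQ]
    simp only [Matrix.smul_apply, Matrix.vecMulVec_apply, smul_eq_mul]
    rw [hv i, hv j, div_eq_mul_inv]
    ring
end

section
/- Suppose the graph G is connected. If x ∈ ℝ^n is a nonzero vector orthogonal to v (i.e. ⟨x, v⟩ = 0) and P·x = ω·x for some real ω, then 0 ≤ ω < 1. -/
open scoped Matrix

/-- For a connected graph, every eigenvalue of the propagation matrix `P = (I + M)/2`
on the orthogonal complement of `v` satisfies `0 ≤ ω < 1` (the second largest
eigenvalue is strictly below 1). -/
theorem stmt_13 (n : ℕ) (hn : 1 ≤ n) (G : SimpleGraph (Fin n)) [DecidableRel G.Adj]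
    (hconn : G.Connected)
    (A : Matrix (Fin n) (Fin n) ℝ) (hA : A = G.adjMatrix ℝ)
    (d : Fin n → ℝ) (hd : ∀ i, d i = ∑ j, A i j)
    (M : Matrix (Fin n) (Fin n) ℝ)
    (hM : M = Matrix.diagonal (fun i => (Real.sqrt (d i + 1))⁻¹) * (A + 1) *
              Matrix.diagonal (fun i => (Real.sqrt (d i + 1))⁻¹))
    (P : Matrix (Fin n) (Fin n) ℝ) (hP : P = (2 : ℝ)⁻¹ • (1 + M))
    (v : Fin n → ℝ) (hv : ∀ i, v i = Real.sqrt (d i + 1))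
    (x : Fin n → ℝ) (hx : x ≠ 0) (hxv : x ⬝ᵥ v = 0)
    (ω : ℝ) (hωx : P.mulVec x = ω • x) :
    0 ≤ ω ∧ ω < 1 := by
  -- basic facts about degrees and s i = sqrt (d i + 1)
  have hAnn : ∀ i j, 0 ≤ A i j := by
    intro i j; rw [hA, SimpleGraph.adjMatrix_apply]; split_ifs <;> norm_num
  have hd0 : ∀ i, 0 ≤ d i := fun i => by
    rw [hd i]; exact Finset.sum_nonneg fun j _ => hAnn i j
  set s : Fin n → ℝ := fun i => Real.sqrt (d i + 1) with hs
  have hspos : ∀ i, 0 < s i := fun i => Real.sqrt_pos.mpr (by linarith [hd0 i])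
  have hssq : ∀ i, s i * s i = d i + 1 := fun i =>
    Real.mul_self_sqrt (by linarith [hd0 i])
  set y : Fin n → ℝ := fun i => x i / s i with hy
  have hxy : ∀ i, x i = s i * y i := fun i => by
    show x i = s i * (x i / s i)
    field_simp [(hspos i).ne']
  -- symmetry of A
  have hAsymm : ∀ i j, A i j = A j i := by
    intro i j; rw [hA]; simp [SimpleGraph.adjMatrix_apply, G.adj_comm]
  -- key sums
  set Qd : ℝ := ∑ i, d i * (y i * y i) with hQd
  set T : ℝ := ∑ i, y i * y i with hT
  set S : ℝ := ∑ i, ∑ j, A i j * (y i * y j) with hS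
  -- ∑ᵢ∑ⱼ A i j * y i ^2 = Qd
  have hQd1 : (∑ i, ∑ j, A i j * (y i * y i)) = Qd := by
    rw [hQd]
    refine Finset.sum_congr rfl fun i _ => ?_
    rw [← Finset.sum_mul, ← hd i]
  have hQd2 : (∑ i, ∑ j, A i j * (y j * y j)) = Qd := by
    rw [← hQd1, Finset.sum_comm]
    exact Finset.sum_congr rfl fun i _ => Finset.sum_congr rfl fun j _ => by
      rw [hAsymm i j]
  -- x ⬝ x = Qd + T
  have hip : x ⬝ᵥ x = Qd + T := by
    rw [dotProduct, hQd, hT, ← Finset.sum_add_distrib]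
    refine Finset.sum_congr rfl fun i _ => ?_
    rw [hxy i]; ring_nf; rw [show s i ^ 2 = s i * s i by ring, hssq i]; ring
  have hippos : 0 < Qd + T := by
    rw [← hip]
    have hnn : 0 ≤ x ⬝ᵥ x := by
      rw [dotProduct]
      exact Finset.sum_nonneg fun i _ => mul_self_nonneg (x i)
    rcases lt_or_eq_of_le hnn with h | h
    · exact h
    · exact absurd (dotProduct_self_eq_zero.mp h.symm) hx
  -- x ⬝ M x = S + T
  have hMij : ∀ i j, M i j = (s i)⁻¹ * ((A + 1) i j) * (s j)⁻¹ := by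
    intro i j
    rw [hM, Matrix.mul_diagonal, Matrix.diagonal_mul]
  have hMx : x ⬝ᵥ M.mulVec x = S + T := by
    rw [dotProduct]
    have : ∀ i, x i * M.mulVec x i
        = ∑ j, (A i j * (y i * y j) + if i = j then y i * y i else 0) := by
      intro i
      rw [Matrix.mulVec, dotProduct, Finset.mul_sum]
      refine Finset.sum_congr rfl fun j _ => ?_
      rw [hMij i j, hxy i, hxy j]
      have h1 : (A + 1) i j = A i j + if i = j then 1 else 0 := by
        simp [Matrix.one_apply]
      rw [h1]
      have hi := (hspos i).ne'
      have hj := (hspos j).ne'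
      split_ifs with hij
      · subst hij; field_simp
      · field_simp; ring
    rw [Finset.sum_congr rfl fun i _ => this i]
    have h3 : ∀ i : Fin n, (∑ j, (A i j * (y i * y j) + if i = j then y i * y i else 0))
        = (∑ j, A i j * (y i * y j)) + y i * y i := by
      intro i
      rw [Finset.sum_add_distrib]
      congr 1
      simp
    rw [Finset.sum_congr rfl fun i _ => h3 i, Finset.sum_add_distrib, ← hS, ← hT]
  -- eigen equation paired with x
  have hkey : ω * (Qd + T) = 2⁻¹ * ((Qd + T) + (S + T)) := by
    have h1 : x ⬝ᵥ P.mulVec x = ω * (x ⬝ᵥ x) := by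
      rw [hωx, dotProduct_smul, smul_eq_mul]
    have h2 : x ⬝ᵥ P.mulVec x = 2⁻¹ * (x ⬝ᵥ x + x ⬝ᵥ M.mulVec x) := by
      rw [hP, Matrix.smul_mulVec, dotProduct_smul, Matrix.add_mulVec,
        Matrix.one_mulVec, dotProduct_add, smul_eq_mul]
    rw [h1, hip, hMx] at h2
    linarith [h2]
  -- positivity of the two quadratic forms
  have hplus : (∑ i, ∑ j, A i j * ((y i + y j) * (y i + y j))) = 2 * (Qd + S) := by
    have hexp : (∑ i, ∑ j, A i j * ((y i + y j) * (y i + y j)))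
        = (∑ i, ∑ j, A i j * (y i * y i)) + ((∑ i, ∑ j, A i j * (y j * y j))
          + 2 * ∑ i, ∑ j, A i j * (y i * y j)) := by
      simp_rw [Finset.mul_sum, ← Finset.sum_add_distrib]
      exact Finset.sum_congr rfl fun i _ => Finset.sum_congr rfl fun j _ => by ring
    rw [hexp, hQd1, hQd2, ← hS]
    linarith
  have hminus : (∑ i, ∑ j, A i j * ((y i - y j) * (y i - y j))) = 2 * (Qd - S) := by
    have hexp : (∑ i, ∑ j, A i j * ((y i - y j) * (y i - y j)))
        = (∑ i, ∑ j, A i j * (y i * y i)) + ((∑ i, ∑ j, A i j * (y j * y j))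
          + (-2) * ∑ i, ∑ j, A i j * (y i * y j)) := by
      simp_rw [Finset.mul_sum, ← Finset.sum_add_distrib]
      exact Finset.sum_congr rfl fun i _ => Finset.sum_congr rfl fun j _ => by ring
    rw [hexp, hQd1, hQd2, ← hS]
    linarith
  have hplus_nn : 0 ≤ Qd + S := by
    have h := Finset.sum_nonneg (fun i (_ : i ∈ Finset.univ) =>
      Finset.sum_nonneg (fun j (_ : j ∈ Finset.univ) =>
        mul_nonneg (hAnn i j) (mul_self_nonneg (y i + y j))))
    rw [hplus] at h; linarith
  have hminus_nn : 0 ≤ Qd - S := by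
    have h := Finset.sum_nonneg (fun i (_ : i ∈ Finset.univ) =>
      Finset.sum_nonneg (fun j (_ : j ∈ Finset.univ) =>
        mul_nonneg (hAnn i j) (mul_self_nonneg (y i - y j))))
    rw [hminus] at h; linarith
  have hTnn : 0 ≤ T := Finset.sum_nonneg fun i _ => mul_self_nonneg (y i)
  constructor
  · -- 0 ≤ ω
    nlinarith [hkey, hippos, hplus_nn, hTnn]
  · -- ω < 1
    rcases lt_or_eq_of_le (show ω ≤ 1 by nlinarith [hkey, hippos, hminus_nn]) with h | h
    · exact h
    -- ω = 1 : derive contradiction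
    exfalso
    have hQdS : Qd = S := by rw [h] at hkey; linarith
    have hzero : (∑ i, ∑ j, A i j * ((y i - y j) * (y i - y j))) = 0 := by
      rw [hminus, hQdS]; ring
    have hterm : ∀ i j, A i j * ((y i - y j) * (y i - y j)) = 0 := by
      intro i j
      have h1 := (Finset.sum_eq_zero_iff_of_nonneg (fun i _ =>
        Finset.sum_nonneg (fun j _ =>
          mul_nonneg (hAnn i j) (mul_self_nonneg (y i - y j))))).mp hzero i (Finset.mem_univ i)
      exact (Finset.sum_eq_zero_iff_of_nonneg (fun j _ =>
        mul_nonneg (hAnn i j) (mul_self_nonneg (y i - y j)))).mp h1 j (Finset.mem_univ j)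
    have hadj : ∀ i j, G.Adj i j → y i = y j := by
      intro i j hij
      have hA1 : A i j = 1 := by rw [hA]; simp [SimpleGraph.adjMatrix_apply, hij]
      have := hterm i j
      rw [hA1, one_mul] at this
      have := mul_self_eq_zero.mp this
      linarith
    -- connectivity: y is constant
    have hconst : ∀ i j : Fin n, y i = y j := by
      intro i j
      obtain ⟨w⟩ := hconn.preconnected i j
      induction w with
      | nil => rfl
      | cons h p ih => exact (hadj _ _ h).trans ih
    set i0 : Fin n := ⟨0, hn⟩ with hi0
    set c : ℝ := y i0 with hc
    have hxc : ∀ i, x i = c * s i := fun i => by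
      rw [hxy i, hconst i i0, ← hc]; ring
    have hdot : x ⬝ᵥ v = c * ∑ i, (d i + 1) := by
      rw [dotProduct, Finset.mul_sum]
      refine Finset.sum_congr rfl fun i _ => ?_
      rw [hxc i, hv i]
      have h2 : Real.sqrt (d i + 1) = s i := rfl
      rw [h2, mul_assoc, hssq i]
    have hsumpos : 0 < ∑ i, (d i + 1) := by
      refine Finset.sum_pos (fun i _ => by linarith [hd0 i]) ?_
      exact ⟨i0, Finset.mem_univ i0⟩
    have hc0 : c = 0 := by
      rw [hdot] at hxv
      rcases mul_eq_zero.mp hxv with h' | h'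
      · exact h'
      · exact absurd h' hsumpos.ne'
    apply hx
    funext i
    rw [hxc i, hc0]; simp
end
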